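/- arXiv:2302.09982 — 4 statements merged into one kernel-verified Lean document; each statement's English description precedes it below -/
import Mathlib

section
/- (Bethke) Every non-total partial combinatory algebra contains a left passive element: if A is a pca whose application a·b is undefined for some a, b ∈ A, then there exists an element d ∈ A such that d·x is undefined for every x ∈ A. -/
/-- Strict extension of a partial binary operation to partial arguments:
a compound product is defined only if all its subproducts are defined. -/
def pApp {A : Type} (app : A → A → Part A) (x y : Part A) : Part A :=
  x.bind fun a => y.bind fun b => app a b

/-- Bethke: every non-total partial combinatory algebra contains a
left passive element: if `A` is a pca whose application `a·b` is undefined for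
some `a, b ∈ A`, then there is `d ∈ A` with `d·x` undefined for every `x ∈ A`. -/
theorem stmt2 (A : Type) [Nonempty A] (app : A → A → Part A) (s k : A)
    (h0 : ∀ x y : A, (pApp app (pApp app (Part.some s) (Part.some x)) (Part.some y)).Dom)
    (h1 : ∀ x y z : A,
      pApp app (pApp app (pApp app (Part.some s) (Part.some x)) (Part.some y)) (Part.some z)
        = pApp app (pApp app (Part.some x) (Part.some z)) (pApp app (Part.some y) (Part.some z)))
    (h2 : ∀ x y : A,
      pApp app (pApp app (Part.some k) (Part.some x)) (Part.some y) = Part.some x)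
    (hnontotal : ∃ a b : A, ¬ (app a b).Dom) :
    ∃ d : A, ∀ x : A, ¬ (app d x).Dom := by
  obtain ⟨a, b, hab⟩ := hnontotal
  -- k·x·y = x, in bind form
  have hk : ∀ x y : A, (app k x).bind (fun u => app u y) = Part.some x := by
    intro x y
    have := h2 x y
    simpa [pApp] using this
  -- get ka with app k a = some ka, and app ka y = some a for all y
  have hka_mem : a ∈ (app k a).bind (fun u => app u a) := by
    rw [hk]; exact Part.mem_some a
  obtain ⟨ka, hka, -⟩ := Part.mem_bind_iff.mp hka_mem
  have hka_eq : app k a = Part.some ka := Part.eq_some_iff.mpr hka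
  have hkay : ∀ y : A, app ka y = Part.some a := by
    intro y
    have := hk a y
    rwa [hka_eq, Part.bind_some] at this
  have hkb_mem : b ∈ (app k b).bind (fun u => app u b) := by
    rw [hk]; exact Part.mem_some b
  obtain ⟨kb, hkb, -⟩ := Part.mem_bind_iff.mp hkb_mem
  have hkb_eq : app k b = Part.some kb := Part.eq_some_iff.mpr hkb
  have hkby : ∀ y : A, app kb y = Part.some b := by
    intro y
    have := hk b y
    rwa [hkb_eq, Part.bind_some] at this
  -- d := s·ka·kb
  have hs : ((app s ka).bind fun u => app u kb).Dom := by
    have := h0 ka kb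
    simpa [pApp] using this
  obtain ⟨d, hd⟩ := Part.dom_iff_mem.mp hs
  have hd_eq : ((app s ka).bind fun u => app u kb) = Part.some d :=
    Part.eq_some_iff.mpr hd
  refine ⟨d, fun x hdx => hab ?_⟩
  have := h1 ka kb x
  simp only [pApp, Part.bind_some] at this
  rw [hd_eq, Part.bind_some, hkay, hkby, Part.bind_some, Part.bind_some] at this
  rw [← this]
  exact hdx
end

section
/- A pargoid A is combinatorially complete if and only if there exist elements s, k ∈ A making A a semicombinatory algebra, and moreover A either is total or contains a left passive element. -/
/-- Formal `n`-ary polynomials of a pargoid with carrier `A`. -/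
inductive PTerm (A : Type) (n : ℕ) : Type where
  | var : Fin n → PTerm A n
  | const : A → PTerm A n
  | app : PTerm A n → PTerm A n → PTerm A n

/-- The partial operation `Aⁿ ⇀ A` induced by a polynomial. -/
def evalP {A : Type} {n : ℕ} (app : A → A → Part A) (x : Fin n → A) :
    PTerm A n → Part A
  | .var i => Part.some (x i)
  | .const a => Part.some a
  | .app r q => (evalP app x r).bind fun u => (evalP app x q).bind fun v => app u v

/-- The left-associated partial product `a·b₁·…·bₘ`. -/
def chain {A : Type} (app : A → A → Part A) : Part A → List A → Part A
  | a, [] => a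
  | a, b :: l => chain app (a.bind fun c => app c b) l

/-- Combinatorial completeness of a pargoid. -/
def CombComplete {A : Type} (app : A → A → Part A) : Prop :=
  ∀ n : ℕ, 1 ≤ n → ∀ p : PTerm A n, ∃ a : A,
    ∀ x : Fin n → A, chain app (Part.some a) (List.ofFn x) = evalP app x p

namespace Stmt3Aux

variable {A : Type} (app : A → A → Part A)

lemma pApp_some_some (a b : A) : pApp app (Part.some a) (Part.some b) = app a b := by
  simp [pApp]

lemma pApp_none_left (y : Part A) : pApp app Part.none y = Part.none := by
  simp [pApp]

lemma pApp_none_right (x : Part A) : pApp app x Part.none = Part.none := by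
  ext v; simp [pApp]

lemma evalP_app {n : ℕ} (x : Fin n → A) (p q : PTerm A n) :
    evalP app x (.app p q) = pApp app (evalP app x p) (evalP app x q) := rfl

lemma chain_cons (a : Part A) (b : A) (l : List A) :
    chain app a (b :: l) = chain app (pApp app a (Part.some b)) l := by
  simp [chain, pApp]

lemma chain_none (l : List A) : chain app Part.none l = Part.none := by
  induction l with
  | nil => rfl
  | cons b l ih => rw [chain_cons, pApp_none_left]; exact ih

lemma chain_concat (a : Part A) (l : List A) (b : A) :
    chain app a (l ++ [b]) = pApp app (chain app a l) (Part.some b) := by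
  induction l generalizing a with
  | nil => simp [chain, pApp]
  | cons c l ih => rw [List.cons_append, chain_cons, chain_cons, ih]

lemma left_some {x y : Part A} {v : A} (h : pApp app x y = Part.some v) :
    ∃ u : A, x = Part.some u := by
  have hv : v ∈ pApp app x y := h ▸ Part.mem_some v
  rw [pApp, Part.mem_bind_iff] at hv
  obtain ⟨u, hu, -⟩ := hv
  exact ⟨u, Part.eq_some_iff.mpr hu⟩

end Stmt3Aux
namespace Stmt3Aux

variable {A : Type} (app : A → A → Part A)

lemma evalP_const {n : ℕ} (x : Fin n → A) (c : A) :
    evalP app x (.const c) = Part.some c := rfl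

lemma evalP_var {n : ℕ} (x : Fin n → A) (j : Fin n) :
    evalP app x (.var j) = Part.some (x j) := rfl

def abs1 (s k i : A) : {n : ℕ} → PTerm A (n + 1) → PTerm A n
  | n, .var j => if h : (j : ℕ) < n then .app (.const k) (.var ⟨j, h⟩) else .const i
  | _, .const c => .app (.const k) (.const c)
  | _, .app p q => .app (.app (.const s) (abs1 s k i p)) (abs1 s k i q)

lemma abs1_spec (s k i : A)
    (hs : ∀ x y z : A,
      pApp app (pApp app (pApp app (Part.some s) (Part.some x)) (Part.some y)) (Part.some z)
        = pApp app (pApp app (Part.some x) (Part.some z)) (pApp app (Part.some y) (Part.some z)))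
    (hk : ∀ x y : A, pApp app (pApp app (Part.some k) (Part.some x)) (Part.some y) = Part.some x)
    (hi : ∀ y : A, pApp app (Part.some i) (Part.some y) = Part.some y)
    {n : ℕ} (t : PTerm A (n + 1)) (x : Fin n → A) (y : A) :
    pApp app (evalP app x (abs1 s k i t)) (Part.some y) = evalP app (Fin.snoc x y) t := by
  induction t with
  | var j =>
    by_cases h : (j : ℕ) < n
    · simp only [abs1, dif_pos h, evalP_app, evalP_const, evalP_var, hk]
      congr 1
      simp [Fin.snoc, h]
      rfl
    · simp only [abs1, dif_neg h, evalP_const, evalP_var, hi]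
      congr 1
      have hj : j = Fin.last n := by
        apply Fin.ext
        have := j.isLt
        simp only [Fin.val_last]
        omega
      rw [hj, Fin.snoc_last]
  | const c =>
    simp only [abs1, evalP_app, evalP_const, hk]
  | app p q ihp ihq =>
    simp only [abs1, evalP_app, evalP_const]
    rcases Part.eq_none_or_eq_some (evalP app x (abs1 s k i p)) with hp | ⟨u, hp⟩
    · rw [hp, pApp_none_right, pApp_none_left, pApp_none_left, ← ihp, hp, pApp_none_left,
        pApp_none_left]
    · rcases Part.eq_none_or_eq_some (evalP app x (abs1 s k i q)) with hq | ⟨v, hq⟩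
      · rw [hq, pApp_none_right, pApp_none_left, ← ihq, hq, pApp_none_left, pApp_none_right]
      · rw [hp, hq, hs u v y, ← ihp, ← ihq, hp, hq]

def absN (s k i : A) : {n : ℕ} → PTerm A n → PTerm A 0
  | 0, t => t
  | _ + 1, t => absN s k i (abs1 s k i t)

lemma absN_spec (s k i : A)
    (hs : ∀ x y z : A,
      pApp app (pApp app (pApp app (Part.some s) (Part.some x)) (Part.some y)) (Part.some z)
        = pApp app (pApp app (Part.some x) (Part.some z)) (pApp app (Part.some y) (Part.some z)))
    (hk : ∀ x y : A, pApp app (pApp app (Part.some k) (Part.some x)) (Part.some y) = Part.some x)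
    (hi : ∀ y : A, pApp app (Part.some i) (Part.some y) = Part.some y) :
    ∀ {n : ℕ} (t : PTerm A n) (x : Fin n → A),
      chain app (evalP app (fun j => j.elim0) (absN s k i t)) (List.ofFn x) = evalP app x t := by
  intro n
  induction n with
  | zero =>
    intro t x
    have hx : x = fun j => j.elim0 := funext fun j => j.elim0
    rw [hx]
    rfl
  | succ n ih =>
    intro t x
    have hofn : List.ofFn x = List.ofFn (fun j : Fin n => x j.castSucc) ++ [x (Fin.last n)] := by
      rw [List.ofFn_succ']
      simp
    rw [hofn, chain_concat,
      show absN s k i t = absN s k i (abs1 s k i t) from rfl,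
      ih (abs1 s k i t) (fun j => x j.castSucc),
      abs1_spec app s k i hs hk hi t (fun j => x j.castSucc) (x (Fin.last n))]
    congr 1
    funext j
    refine Fin.lastCases ?_ ?_ j
    · rw [Fin.snoc_last]
    · intro j; rw [Fin.snoc_castSucc]

lemma evalP_dom (htot : ∀ a b : A, (app a b).Dom) {n : ℕ} (t : PTerm A n) (x : Fin n → A) :
    (evalP app x t).Dom := by
  induction t with
  | var j => trivial
  | const c => trivial
  | app p q ihp ihq =>
    obtain ⟨u, hu⟩ := Part.dom_iff_mem.mp ihp
    obtain ⟨v, hv⟩ := Part.dom_iff_mem.mp ihq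
    rw [evalP_app, Part.eq_some_iff.mpr hu, Part.eq_some_iff.mpr hv, pApp_some_some]
    exact htot u v

end Stmt3Aux
namespace Stmt3Aux

variable {A : Type} (app : A → A → Part A)

lemma chain1 (a b : A) :
    chain app (Part.some a) [b] = pApp app (Part.some a) (Part.some b) := by
  rw [chain_cons]; rfl

lemma chain2 (a b c : A) :
    chain app (Part.some a) [b, c]
      = pApp app (pApp app (Part.some a) (Part.some b)) (Part.some c) := by
  rw [chain_cons, chain_cons]; rfl

lemma chain3 (a b c e : A) :
    chain app (Part.some a) [b, c, e]
      = pApp app (pApp app (pApp app (Part.some a) (Part.some b)) (Part.some c))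
          (Part.some e) := by
  rw [chain_cons, chain_cons, chain_cons]; rfl

end Stmt3Aux

open Stmt3Aux in
/-- a pargoid `A` is combinatorially complete iff there exist
`s, k ∈ A` making `A` a semicombinatory algebra (i.e. `s·x·y·z ≃ x·z·(y·z)` and
`k·x·y = x`), and moreover `A` either is total or contains a left passive
element. -/
theorem stmt3 (A : Type) [Nonempty A] (app : A → A → Part A) :
    CombComplete app ↔
      ((∃ s k : A,
          (∀ x y z : A,
            pApp app (pApp app (pApp app (Part.some s) (Part.some x)) (Part.some y)) (Part.some z)
              = pApp app (pApp app (Part.some x) (Part.some z)) (pApp app (Part.some y) (Part.some z))) ∧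
          (∀ x y : A,
            pApp app (pApp app (Part.some k) (Part.some x)) (Part.some y) = Part.some x)) ∧
        ((∀ a b : A, (app a b).Dom) ∨ (∃ d : A, ∀ x : A, ¬ (app d x).Dom))) := by
  constructor
  · intro hcc
    constructor
    · obtain ⟨s, hs⟩ := hcc 3 (by norm_num)
        (.app (.app (.var 0) (.var 2)) (.app (.var 1) (.var 2)))
      obtain ⟨k, hk⟩ := hcc 2 (by norm_num) (.var 0)
      refine ⟨s, k, fun x y z => ?_, fun x y => ?_⟩
      · have h := hs ![x, y, z]
        have hl : List.ofFn ![x, y, z] = [x, y, z] := by simp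
        rw [hl, chain3] at h
        rw [h]
        simp only [evalP_app, evalP_var]
        norm_num
        rfl
      · have h := hk ![x, y]
        have hl : List.ofFn ![x, y] = [x, y] := by simp
        rw [hl, chain2] at h
        rw [h, evalP_var]
        norm_num
    · by_cases htot : ∀ a b : A, (app a b).Dom
      · exact Or.inl htot
      · push_neg at htot
        obtain ⟨a, b, hab⟩ := htot
        obtain ⟨e, he⟩ := hcc 1 le_rfl (.app (.const a) (.const b))
        refine Or.inr ⟨e, fun x => ?_⟩
        have h := he ![x]
        have hl : List.ofFn ![x] = [x] := by simp
        rw [hl, chain1, pApp_some_some] at h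
        simp only [evalP_app, evalP_const, pApp_some_some] at h
        rw [h, Part.eq_none_iff'.mpr hab]
        simp
  · rintro ⟨⟨s, k, hs, hk⟩, htd⟩
    -- build the identity element i from s and k
    obtain ⟨y0⟩ := (inferInstance : Nonempty A)
    have hkval : ∀ y : A,
        pApp app (pApp app (Part.some k) (Part.some y))
          (pApp app (Part.some k) (Part.some y)) = Part.some y := by
      intro y
      obtain ⟨w, hw⟩ := left_some app (hk y y)
      have h2 := hk y w
      rw [hw] at h2 ⊢
      exact h2
    have hsk : ∀ y : A,
        pApp app (pApp app (pApp app (Part.some s) (Part.some k)) (Part.some k))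
          (Part.some y) = Part.some y := fun y => by rw [hs k k y, hkval y]
    obtain ⟨i0, hi0⟩ := left_some app (hsk y0)
    have hi : ∀ y : A, pApp app (Part.some i0) (Part.some y) = Part.some y := by
      intro y
      have h := hsk y
      rw [hi0] at h
      exact h
    -- combinatorial completeness via bracket abstraction
    intro n hn p
    rcases Part.eq_none_or_eq_some (evalP app (fun j => j.elim0) (absN s k i0 p))
      with h0 | ⟨a, ha⟩
    · have hall : ∀ x : Fin n → A, evalP app x p = Part.none := by
        intro x
        rw [← absN_spec app s k i0 hs hk hi p x, h0, chain_none]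
      rcases htd with htot | ⟨d, hd⟩
      · exfalso
        have hdom := evalP_dom app htot p (fun _ => y0)
        rw [hall] at hdom
        exact hdom
      · refine ⟨d, fun x => ?_⟩
        obtain ⟨m, rfl⟩ : ∃ m, n = m + 1 := ⟨n - 1, by omega⟩
        rw [hall, List.ofFn_succ, chain_cons, pApp_some_some,
          Part.eq_none_iff'.mpr (hd (x 0)), chain_none]
    · refine ⟨a, fun x => ?_⟩
      rw [← ha]
      exact absN_spec app s k i0 hs hk hi p x
end

section
/- Let A be a semicombinatory algebra, Y a set of variables, x ∈ Y, and p a formal polynomial of A in variables from Y (a term over variables in Y, constants for elements of A, and the constants s, k). Then for every assignment c : Y∖{x} → A and every b ∈ A: eval(λ*x.p)(c) · b ≃ eval(p)(c ∪ {x ↦ b}) (Kleene equality), where eval denotes partial evaluation in A and λ*x.p does not contain x. -/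
/-- Formal polynomials of a semicombinatory algebra with carrier `A` in
variables from `Y`: terms built from variables, constants for elements of `A`,
the constant symbols `S`, `K`, and the binary application symbol. -/
inductive PolyTerm (A : Type) (Y : Type) : Type where
  | var : Y → PolyTerm A Y
  | const : A → PolyTerm A Y
  | S : PolyTerm A Y
  | K : PolyTerm A Y
  | app : PolyTerm A Y → PolyTerm A Y → PolyTerm A Y

/-- Whether the variable `x` occurs in a formal polynomial. -/
def occursIn {A Y : Type} [DecidableEq Y] (x : Y) : PolyTerm A Y → Bool
  | .var y => decide (y = x)
  | .const _ => false
  | .S => false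
  | .K => false
  | .app r q => occursIn x r || occursIn x q

/-- The abstraction operator `λ*x`:
`λ*x.x := s·k·k`; `λ*x.p := k·p` if `x` does not occur in `p`;
`λ*x.(r·q) := s·(λ*x.r)·(λ*x.q)` otherwise. -/
def lamStar {A Y : Type} [DecidableEq Y] (x : Y) : PolyTerm A Y → PolyTerm A Y
  | .var y =>
      if y = x then .app (.app .S .K) .K else .app .K (.var y)
  | .app r q =>
      if occursIn x (.app r q) then .app (.app .S (lamStar x r)) (lamStar x q)
      else .app .K (.app r q)
  | .const a => .app .K (.const a)
  | .S => .app .K .S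
  | .K => .app .K .K

/-- Partial evaluation of a formal polynomial in a semicombinatory algebra
(with interpretations `s`, `k` of the constants `S`, `K`) under an assignment
`c : Y → A`; a product is defined only when both factors are defined and their
product in `A` is defined. -/
def evalT {A Y : Type} (app : A → A → Part A) (s k : A) (c : Y → A) :
    PolyTerm A Y → Part A
  | .var y => Part.some (c y)
  | .const a => Part.some a
  | .S => Part.some s
  | .K => Part.some k
  | .app r q => (evalT app s k c r).bind fun u => (evalT app s k c q).bind fun v => app u v

section Aux
variable {A Y : Type} [DecidableEq Y]

lemma pApp_none_left (app : A → A → Part A) (Z : Part A) :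
    pApp app Part.none Z = Part.none := by
  ext a; simp [pApp]

lemma pApp_none_right (app : A → A → Part A) (Z : Part A) :
    pApp app Z Part.none = Part.none := by
  ext a; simp [pApp]

lemma pApp_some_some (app : A → A → Part A) (a b : A) :
    pApp app (Part.some a) (Part.some b) = app a b := by
  simp [pApp]

lemma eval_update_of_not_occurs (app : A → A → Part A) (s k : A) (x : Y) (c : Y → A) (b : A) :
    ∀ p : PolyTerm A Y, occursIn x p = false →
      evalT app s k (Function.update c x b) p = evalT app s k c p := by
  intro p
  induction p with
  | var y =>
      intro h
      simp [occursIn] at h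
      simp [evalT, Function.update_of_ne h]
  | const a => intro _; rfl
  | S => intro _; rfl
  | K => intro _; rfl
  | app r q ihr ihq =>
      intro h
      simp [occursIn] at h
      simp [evalT, ihr h.1, ihq h.2]

lemma occurs_lamStar (x : Y) (A : Type) :
    ∀ p : PolyTerm A Y, occursIn x (lamStar x p) = false := by
  intro p
  induction p with
  | var y =>
      by_cases h : y = x <;> simp [lamStar, h, occursIn]
  | const a => simp [lamStar, occursIn]
  | S => simp [lamStar, occursIn]
  | K => simp [lamStar, occursIn]
  | app r q ihr ihq =>
      by_cases h : occursIn x (PolyTerm.app r q) = true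
      · rw [lamStar, if_pos h]
        simp [occursIn, ihr, ihq]
      · rw [lamStar, if_neg h]
        simp only [Bool.not_eq_true, occursIn, Bool.or_eq_false_iff] at h
        simp [occursIn, h.1, h.2]

end Aux

/-- in a semicombinatory algebra `A`, for every variable `x`,
every formal polynomial `p`, every assignment `c` (to the variables other than
`x`) and every `b ∈ A`:
`eval(λ*x.p)(c) · b ≃ eval(p)(c ∪ {x ↦ b})` (Kleene equality); moreover
`x` does not occur in `λ*x.p`. -/
theorem stmt6 (A : Type) [Nonempty A] (Y : Type) [DecidableEq Y]
    (app : A → A → Part A) (s k : A)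
    (h1 : ∀ x y z : A,
      pApp app (pApp app (pApp app (Part.some s) (Part.some x)) (Part.some y)) (Part.some z)
        = pApp app (pApp app (Part.some x) (Part.some z)) (pApp app (Part.some y) (Part.some z)))
    (h2 : ∀ x y : A,
      pApp app (pApp app (Part.some k) (Part.some x)) (Part.some y) = Part.some x) :
    ∀ (x : Y) (p : PolyTerm A Y),
      occursIn x (lamStar x p) = false ∧
      ∀ (c : Y → A) (b : A),
        pApp app (evalT app s k c (lamStar x p)) (Part.some b)
          = evalT app s k (Function.update c x b) p := by
  intro x p
  have h1' : ∀ (X Z : Part A) (z : A),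
      pApp app (pApp app (pApp app (Part.some s) X) Z) (Part.some z)
        = pApp app (pApp app X (Part.some z)) (pApp app Z (Part.some z)) := by
    intro X Z z
    by_cases hX : X.Dom
    · by_cases hZ : Z.Dom
      · have h := h1 (X.get hX) (Z.get hZ) z
        rwa [Part.some_get, Part.some_get] at h
      · rw [Part.eq_none_iff'.mpr hZ]
        simp [pApp_none_left, pApp_none_right]
    · rw [Part.eq_none_iff'.mpr hX]
      simp [pApp_none_left, pApp_none_right]
  have kdef : ∀ v : A, ∃ u, pApp app (Part.some k) (Part.some v) = Part.some u := by
    intro v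
    have h := h2 v v
    rw [pApp_some_some] at h
    have hv : v ∈ pApp app (app k v) (Part.some v) := by rw [h]; exact Part.mem_some v
    simp only [pApp, Part.mem_bind_iff] at hv
    obtain ⟨u, hu, _⟩ := hv
    exact ⟨u, by rw [pApp_some_some]; exact Part.eq_some_iff.mpr hu⟩
  refine ⟨occurs_lamStar x A p, ?_⟩
  induction p with
  | var y =>
      intro c b
      by_cases h : y = x
      · subst h
        rw [lamStar, if_pos rfl]
        show pApp app (pApp app (pApp app (Part.some s) (Part.some k)) (Part.some k))
            (Part.some b) = Part.some (Function.update c y b y)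
        rw [h1', Function.update_self]
        obtain ⟨u, hu⟩ := kdef b
        rw [hu]
        have h := h2 b u
        rw [hu] at h
        exact h
      · rw [lamStar, if_neg h]
        show pApp app (pApp app (Part.some k) (Part.some (c y))) (Part.some b)
            = Part.some (Function.update c x b y)
        rw [h2, Function.update_of_ne h]
  | const a =>
      intro c b
      rw [lamStar]
      exact h2 a b
  | S =>
      intro c b
      rw [lamStar]
      exact h2 s b
  | K =>
      intro c b
      rw [lamStar]
      exact h2 k b
  | app r q ihr ihq =>
      intro c b
      by_cases h : occursIn x (PolyTerm.app r q) = true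
      · rw [lamStar, if_pos h]
        show pApp app (pApp app (pApp app (Part.some s) (evalT app s k c (lamStar x r)))
            (evalT app s k c (lamStar x q))) (Part.some b)
            = pApp app (evalT app s k (Function.update c x b) r)
                (evalT app s k (Function.update c x b) q)
        rw [h1', ihr c b, ihq c b]
      · rw [lamStar, if_neg h]
        simp only [Bool.not_eq_true] at h
        show pApp app (pApp app (Part.some k) (evalT app s k c (PolyTerm.app r q)))
            (Part.some b) = evalT app s k (Function.update c x b) (PolyTerm.app r q)
        rw [eval_update_of_not_occurs app s k x c b _ h]
        set E := evalT app s k c (PolyTerm.app r q) with hE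
        by_cases hD : E.Dom
        · rw [← Part.some_get hD, h2]
        · rw [Part.eq_none_iff'.mpr hD, pApp_none_right, pApp_none_left]
end

section
/- Let X be an infinite set of variables, i := S·K·K, ω := S·i·i, d := S·(K·ω)·(K·ω), L := { n ∈ N | n*x is defined for every variable x ∈ X not occurring in n }, and N' := L ∪ {d}, with the product *' on N' given by m *' n := m*n when m*n is defined and lies in N' (undefined otherwise). Then there are no elements t, u ∈ N' such that ⟨N', *', t, u⟩ is a partial combinatory algebra; in fact there is no t ∈ N' such that t *' x *' y is defined for all x, y ∈ N' and t *' x *' y *' z ≃ x *' z *' (y *' z) for all x, y, z ∈ N'. -/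
/-- CL-terms over a set of variables `X`: the free magma generated by `X`
together with two extra constants `S` and `K`. -/
inductive CL (X : Type) : Type where
  | var : X → CL X
  | S : CL X
  | K : CL X
  | app : CL X → CL X → CL X

/-- One-step CL-reduction: the smallest relation closed under contexts
containing `S·x·y·z → x·z·(y·z)` and `K·x·y → x`. -/
inductive Red {X : Type} : CL X → CL X → Prop where
  | sRed (x y z : CL X) :
      Red (.app (.app (.app .S x) y) z) (.app (.app x z) (.app y z))
  | kRed (x y : CL X) : Red (.app (.app .K x) y) x
  | appL {a a' : CL X} (b : CL X) : Red a a' → Red (.app a b) (.app a' b)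
  | appR (a : CL X) {b b' : CL X} : Red b b' → Red (.app a b) (.app a b')

/-- Reflexive-transitive closure of one-step CL-reduction. -/
def RedStar {X : Type} : CL X → CL X → Prop := Relation.ReflTransGen Red

/-- A CL-term is a normal form if it admits no one-step reduct. -/
def IsNormal {X : Type} (t : CL X) : Prop := ¬ ∃ u, Red t u

/-- For CL-terms `m`, `n`, the normal form of `m·n` if it exists (undefined
otherwise); normal forms are unique since CL-reduction is confluent. -/
noncomputable def clStar {X : Type} (m n : CL X) : Part (CL X) :=
  ⟨∃ u : CL X, IsNormal u ∧ RedStar (CL.app m n) u, fun h => h.choose⟩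

/-- Whether the variable `x` occurs in a CL-term. -/
def varOccurs {X : Type} (x : X) : CL X → Prop
  | .var y => y = x
  | .S => False
  | .K => False
  | .app r q => varOccurs x r ∨ varOccurs x q

/-- `i := S·K·K`. -/
def iTerm (X : Type) : CL X := .app (.app .S .K) .K

/-- `ω := S·i·i`. -/
def omegaTerm (X : Type) : CL X := .app (.app .S (iTerm X)) (iTerm X)

/-- `d := S·(K·ω)·(K·ω)`. -/
def dTerm (X : Type) : CL X :=
  .app (.app .S (.app .K (omegaTerm X))) (.app .K (omegaTerm X))

/-- `L := { n ∈ N | n*x is defined for every variable x ∈ X not occurring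
in n }`. -/
def Lset (X : Type) : Set (CL X) :=
  {n | IsNormal n ∧ ∀ x : X, ¬ varOccurs x n → (clStar n (CL.var x)).Dom}

/-- `N' := L ∪ {d}`. -/
def Nset' (X : Type) : Set (CL X) := Lset X ∪ {dTerm X}

/-- The product `*'` on `N'`: `m *' n := m*n` when `m*n` is defined and lies in
`N'` (undefined otherwise). -/
noncomputable def starIn {X : Type} (m n : CL X) : Part (CL X) :=
  ⟨∃ h : (clStar m n).Dom, (clStar m n).get h ∈ Nset' X,
   fun h => (clStar m n).get h.choose⟩

/-- Strict extension of `*'` to partial arguments. -/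
noncomputable def pStar' {X : Type} (x y : Part (CL X)) : Part (CL X) :=
  x.bind fun a => y.bind fun b => starIn a b

/-! ### Auxiliary development -/

section Aux

variable {X : Type}

local infixl:100 " ⬝ " => CL.app

/-! #### Basic facts about reduction -/

theorem redStar_appL {a a' : CL X} (b : CL X) (h : RedStar a a') :
    RedStar (a ⬝ b) (a' ⬝ b) :=
  Relation.ReflTransGen.lift (fun t => t ⬝ b) (fun _ _ h => Red.appL b h) _ _ h

theorem redStar_appR (a : CL X) {b b' : CL X} (h : RedStar b b') :
    RedStar (a ⬝ b) (a ⬝ b') :=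
  Relation.ReflTransGen.lift (fun t => a ⬝ t) (fun _ _ h => Red.appR a h) _ _ h

theorem redStar_app {a a' b b' : CL X} (h1 : RedStar a a') (h2 : RedStar b b') :
    RedStar (a ⬝ b) (a' ⬝ b') :=
  Relation.ReflTransGen.trans (redStar_appL b h1) (redStar_appR a' h2)

theorem isNormal_var (x : X) : IsNormal (CL.var x) := by rintro ⟨u, h⟩; cases h
theorem isNormal_S : IsNormal (CL.S : CL X) := by rintro ⟨u, h⟩; cases h
theorem isNormal_K : IsNormal (CL.K : CL X) := by rintro ⟨u, h⟩; cases h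

/-- The head of an application is not the beginning of a redex. -/
def HeadOK : CL X → Prop
  | .app (.app .S _) _ => False
  | .app .K _ => False
  | _ => True

theorem isNormal_app {a b : CL X} (ha : IsNormal a) (hb : IsNormal b) (h : HeadOK a) :
    IsNormal (a ⬝ b) := by
  rintro ⟨u, hr⟩
  cases hr with
  | sRed x y z => exact h
  | kRed x y => exact h
  | appL _ h' => exact ha ⟨_, h'⟩
  | appR _ h' => exact hb ⟨_, h'⟩

theorem redStar_normal_eq {t u : CL X} (hn : IsNormal t) (h : RedStar t u) : u = t := by
  induction h with
  | refl => rfl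
  | tail h1 h2 ih => exact absurd ⟨_, ih ▸ h2⟩ hn

/-! #### Parallel reduction and confluence -/

inductive Par : CL X → CL X → Prop
  | var (x : X) : Par (.var x) (.var x)
  | S : Par .S .S
  | K : Par .K .K
  | app {a a' b b' : CL X} : Par a a' → Par b b' → Par (a ⬝ b) (a' ⬝ b')
  | sP {x x' y y' z z' : CL X} : Par x x' → Par y y' → Par z z' →
      Par (.S ⬝ x ⬝ y ⬝ z) (x' ⬝ z' ⬝ (y' ⬝ z'))
  | kP {x x' : CL X} (y : CL X) : Par x x' → Par (.K ⬝ x ⬝ y) x'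

theorem par_refl (t : CL X) : Par t t := by
  induction t with
  | var x => exact .var x
  | S => exact .S
  | K => exact .K
  | app a b iha ihb => exact .app iha ihb

theorem red_par {t u : CL X} (h : Red t u) : Par t u := by
  induction h with
  | sRed x y z => exact .sP (par_refl x) (par_refl y) (par_refl z)
  | kRed x y => exact .kP y (par_refl x)
  | appL b _ ih => exact .app ih (par_refl b)
  | appR a _ ih => exact .app (par_refl a) ih

theorem par_redStar {t u : CL X} (h : Par t u) : RedStar t u := by
  induction h with
  | var x => exact .refl
  | S => exact .refl
  | K => exact .refl
  | app _ _ ih1 ih2 => exact redStar_app ih1 ih2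
  | sP _ _ _ ihx ihy ihz =>
      exact Relation.ReflTransGen.trans
        (Relation.ReflTransGen.single (Red.sRed _ _ _))
        (redStar_app (redStar_app ihx ihz) (redStar_app ihy ihz))
  | kP y _ ih =>
      exact Relation.ReflTransGen.trans
        (Relation.ReflTransGen.single (Red.kRed _ y)) ih

theorem par_S_inv {u : CL X} (h : Par .S u) : u = .S := by cases h; rfl

theorem par_K_inv {u : CL X} (h : Par .K u) : u = .K := by cases h; rfl

theorem par_S1_inv {x u : CL X} (h : Par (.S ⬝ x) u) :
    ∃ x', u = .S ⬝ x' ∧ Par x x' := by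
  cases h with
  | app h1 h2 => exact ⟨_, by rw [par_S_inv h1], h2⟩

theorem par_S2_inv {x y u : CL X} (h : Par (.S ⬝ x ⬝ y) u) :
    ∃ x' y', u = .S ⬝ x' ⬝ y' ∧ Par x x' ∧ Par y y' := by
  cases h with
  | app h1 h2 =>
      obtain ⟨x', rfl, hx⟩ := par_S1_inv h1
      exact ⟨x', _, rfl, hx, h2⟩

theorem par_K1_inv {x u : CL X} (h : Par (.K ⬝ x) u) :
    ∃ x', u = .K ⬝ x' ∧ Par x x' := by
  cases h with
  | app h1 h2 => exact ⟨_, by rw [par_K_inv h1], h2⟩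

/-- Complete development. -/
def cd : CL X → CL X
  | .var x => .var x
  | .S => .S
  | .K => .K
  | .app (.app (.app .S x) y) z => cd x ⬝ cd z ⬝ (cd y ⬝ cd z)
  | .app (.app .K x) _ => cd x
  | .app a b => cd a ⬝ cd b

theorem par_triangle {t u : CL X} (h : Par t u) : Par u (cd t) := by
  induction h with
  | var x => exact .var x
  | S => exact .S
  | K => exact .K
  | sP _ _ _ ihx ihy ihz =>
      simp only [cd]
      exact .app (.app ihx ihz) (.app ihy ihz)
  | kP y _ ih =>
      simp only [cd]
      exact ih
  | @app a a' b b' h1 h2 ih1 ih2 =>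
      rcases a with x | _ | _ | ⟨a1, a2⟩
      · simp only [cd]; exact .app ih1 ih2
      · simp only [cd]; exact .app ih1 ih2
      · simp only [cd]; exact .app ih1 ih2
      · rcases a1 with x1 | _ | _ | ⟨a11, a12⟩
        · simp only [cd]; exact .app ih1 ih2
        · simp only [cd]; exact .app ih1 ih2
        · -- K-redex : t = K ⬝ a2 ⬝ b
          obtain ⟨x', rfl, hx⟩ := par_K1_inv h1
          simp only [cd] at ih1 ⊢
          obtain ⟨x'', heq, hx2⟩ := par_K1_inv ih1
          injection heq with h1' h2'
          exact .kP b' (h2' ▸ hx2)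
        · rcases a11 with x11 | _ | _ | ⟨a111, a112⟩
          · simp only [cd]; exact .app ih1 ih2
          · -- S-redex : t = S ⬝ a12 ⬝ a2 ⬝ b
            obtain ⟨x', y', rfl, hx, hy⟩ := par_S2_inv h1
            simp only [cd] at ih1 ⊢
            obtain ⟨x'', y'', heq, hx2, hy2⟩ := par_S2_inv ih1
            injection heq with h1' h2'
            injection h1' with h3' h4'
            exact .sP (h4' ▸ hx2) (h2' ▸ hy2) ih2
          · simp only [cd]; exact .app ih1 ih2
          · simp only [cd]; exact .app ih1 ih2

theorem par_diamond {t u v : CL X} (h1 : Par t u) (h2 : Par t v) :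
    ∃ w, Par u w ∧ Par v w :=
  ⟨cd t, par_triangle h1, par_triangle h2⟩

theorem par_strip {t u v : CL X} (h : Par t u) (hv : Relation.ReflTransGen Par t v) :
    ∃ w, Relation.ReflTransGen Par u w ∧ Par v w := by
  induction hv with
  | refl => exact ⟨u, .refl, h⟩
  | tail h1 h2 ih =>
      obtain ⟨w, hw1, hw2⟩ := ih
      obtain ⟨c, hc1, hc2⟩ := par_diamond h2 hw2
      exact ⟨c, hw1.tail hc2, hc1⟩

theorem par_conf {t u v : CL X} (hu : Relation.ReflTransGen Par t u)
    (hv : Relation.ReflTransGen Par t v) :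
    ∃ c, Relation.ReflTransGen Par u c ∧ Relation.ReflTransGen Par v c := by
  induction hu with
  | refl => exact ⟨v, hv, .refl⟩
  | tail h1 h2 ih =>
      obtain ⟨c, hc1, hc2⟩ := ih
      obtain ⟨w, hw1, hw2⟩ := par_strip h2 hc1
      exact ⟨w, hw1, hc2.tail hw2⟩

theorem redStar_of_parStar {t u : CL X} (h : Relation.ReflTransGen Par t u) :
    RedStar t u := by
  induction h with
  | refl => exact .refl
  | tail h1 h2 ih => exact Relation.ReflTransGen.trans ih (par_redStar h2)

theorem parStar_of_redStar {t u : CL X} (h : RedStar t u) :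
    Relation.ReflTransGen Par t u :=
  Relation.ReflTransGen.mono (fun _ _ h => red_par h) _ _ h

theorem confluence {t u v : CL X} (hu : RedStar t u) (hv : RedStar t v) :
    ∃ c, RedStar u c ∧ RedStar v c := by
  obtain ⟨c, h1, h2⟩ := par_conf (parStar_of_redStar hu) (parStar_of_redStar hv)
  exact ⟨c, redStar_of_parStar h1, redStar_of_parStar h2⟩

theorem nf_unique {t u v : CL X} (hu : RedStar t u) (hv : RedStar t v)
    (hnu : IsNormal u) (hnv : IsNormal v) : u = v := by
  obtain ⟨c, h1, h2⟩ := confluence hu hv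
  rw [← redStar_normal_eq hnu h1, ← redStar_normal_eq hnv h2]

end Aux
section Aux2

variable {X : Type}

local infixl:100 " ⬝ " => CL.app

/-! #### Substitution -/

def subst (σ : X → CL X) : CL X → CL X
  | .var x => σ x
  | .S => .S
  | .K => .K
  | .app a b => subst σ a ⬝ subst σ b

theorem red_subst {σ : X → CL X} {t u : CL X} (h : Red t u) :
    Red (subst σ t) (subst σ u) := by
  induction h with
  | sRed x y z => exact .sRed _ _ _
  | kRed x y => exact .kRed _ _
  | appL b _ ih => exact .appL _ ih
  | appR a _ ih => exact .appR _ ih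

theorem redStar_subst {σ : X → CL X} {t u : CL X} (h : RedStar t u) :
    RedStar (subst σ t) (subst σ u) :=
  Relation.ReflTransGen.lift (subst σ) (fun _ _ h => red_subst h) _ _ h

theorem subst_eq_self {σ : X → CL X} {t : CL X}
    (h : ∀ q, varOccurs q t → σ q = .var q) : subst σ t = t := by
  induction t with
  | var x => exact h x rfl
  | S => rfl
  | K => rfl
  | app a b iha ihb =>
      show subst σ a ⬝ subst σ b = a ⬝ b
      rw [iha fun q hq => h q (Or.inl hq), ihb fun q hq => h q (Or.inr hq)]

/-! #### Variable occurrence -/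

theorem occurs_of_red {q : X} {t u : CL X} (h : Red t u) (ho : varOccurs q u) :
    varOccurs q t := by
  induction h with
  | sRed x y z =>
      simp only [varOccurs] at ho ⊢
      tauto
  | kRed x y =>
      simp only [varOccurs]
      tauto
  | appL b _ ih =>
      simp only [varOccurs] at ho ⊢
      rcases ho with h | h
      · exact Or.inl (ih h)
      · exact Or.inr h
  | appR a _ ih =>
      simp only [varOccurs] at ho ⊢
      rcases ho with h | h
      · exact Or.inl h
      · exact Or.inr (ih h)

theorem occurs_of_redStar {q : X} {t u : CL X} (h : RedStar t u)
    (ho : varOccurs q u) : varOccurs q t := by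
  induction h with
  | refl => exact ho
  | tail h1 h2 ih => exact ih (occurs_of_red h2 ho)

def varsOf : CL X → List X
  | .var x => [x]
  | .S => []
  | .K => []
  | .app a b => varsOf a ++ varsOf b

theorem occurs_mem_varsOf {q : X} {t : CL X} (h : varOccurs q t) :
    q ∈ varsOf t := by
  induction t with
  | var x => cases h; simp [varsOf]
  | S => exact absurd h (by simp [varOccurs])
  | K => exact absurd h (by simp [varOccurs])
  | app a b iha ihb =>
      rcases h with h | h
      · simp only [varsOf, List.mem_append]; exact Or.inl (iha h)
      · simp only [varsOf, List.mem_append]; exact Or.inr (ihb h)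

/-! #### Divergent terms -/

theorem isNormal_i : IsNormal (iTerm X) :=
  isNormal_app (isNormal_app isNormal_S isNormal_K trivial) isNormal_K trivial

theorem isNormal_omega : IsNormal (omegaTerm X) :=
  isNormal_app (isNormal_app isNormal_S isNormal_i trivial) isNormal_i trivial

theorem isNormal_Komega : IsNormal (.K ⬝ omegaTerm X : CL X) :=
  isNormal_app isNormal_K isNormal_omega trivial

theorem isNormal_d : IsNormal (dTerm X) :=
  isNormal_app (isNormal_app isNormal_S isNormal_Komega trivial) isNormal_Komega trivial

/-- Terms that reduce only to `ω`-like terms. -/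
inductive W : CL X → Prop
  | omega : W (omegaTerm X)
  | iw {w : CL X} : W w → W (iTerm X ⬝ w)
  | kw {w : CL X} (x : CL X) : W w → W (.K ⬝ w ⬝ x)

theorem W_red {t u : CL X} (hw : W t) (h : Red t u) : W u := by
  induction hw generalizing u with
  | omega => exact absurd ⟨_, h⟩ isNormal_omega
  | iw hw ih =>
      cases h with
      | sRed x y z => exact W.kw _ hw
      | appL _ h' => exact absurd ⟨_, h'⟩ isNormal_i
      | appR _ h' => exact W.iw (ih h')
  | kw x hw ih =>
      cases h with
      | kRed x y => exact hw
      | appL _ h' =>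
          cases h' with
          | appL _ h'' => exact absurd ⟨_, h''⟩ isNormal_K
          | appR _ h'' => exact W.kw _ (ih h'')
      | appR _ h' => exact W.kw _ hw

/-- Terms with no normal form. -/
inductive Bad : CL X → Prop
  | dApp (x : CL X) : Bad (dTerm X ⬝ x)
  | pair {a b : CL X} : W a → W b → Bad (a ⬝ b)
  | varApp (q : X) {c : CL X} : Bad c → Bad (.var q ⬝ c)
  | sOm (q : X) {b : CL X} : W b → Bad (.S ⬝ (.K ⬝ .var q) ⬝ omegaTerm X ⬝ b)
  | kApp (q : X) {b c : CL X} : W b → Bad c → Bad (.K ⬝ .var q ⬝ b ⬝ c)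

theorem Bad_red {t u : CL X} (hb : Bad t) (h : Red t u) : Bad u := by
  induction hb generalizing u with
  | dApp x =>
      cases h with
      | sRed _ _ _ => exact Bad.pair (W.kw _ W.omega) (W.kw _ W.omega)
      | appL _ h' => exact absurd ⟨_, h'⟩ isNormal_d
      | appR _ h' => exact Bad.dApp _
  | pair ha hb' =>
      cases h with
      | appL _ h' => exact Bad.pair (W_red ha h') hb'
      | appR _ h' => exact Bad.pair ha (W_red hb' h')
      | sRed x y z =>
          cases ha with
          | omega => exact Bad.pair (W.iw hb') (W.iw hb')
      | kRed x y => cases ha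
  | varApp q hc ih =>
      cases h with
      | appL _ h' => cases h'
      | appR _ h' => exact Bad.varApp q (ih h')
  | sOm q hb' =>
      cases h with
      | sRed x y z => exact Bad.kApp q hb' (Bad.pair W.omega hb')
      | appL _ h' =>
          exact absurd ⟨_, h'⟩ (isNormal_app
            (isNormal_app isNormal_S
              (isNormal_app isNormal_K (isNormal_var q) trivial) trivial)
            isNormal_omega trivial)
      | appR _ h' => exact Bad.sOm q (W_red hb' h')
  | kApp q hb' hc ih =>
      cases h with
      | appL _ h' =>
          cases h' with
          | kRed _ _ => exact Bad.varApp q hc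
          | appL _ h'' =>
              cases h'' with
              | appL _ h3 => cases h3
              | appR _ h3 => cases h3
          | appR _ h'' => exact Bad.kApp q (W_red hb' h'') hc
      | appR _ h' => exact Bad.kApp q hb' (ih h')

theorem Bad_not_normal {t : CL X} (hb : Bad t) : ∃ u, Red t u := by
  induction hb with
  | dApp x => exact ⟨_, .sRed _ _ _⟩
  | pair ha hb' =>
      cases ha with
      | omega => exact ⟨_, .sRed _ _ _⟩
      | iw hw => exact ⟨_, .appL _ (.sRed _ _ _)⟩
      | kw x hw => exact ⟨_, .appL _ (.kRed _ _)⟩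
  | varApp q hc ih =>
      obtain ⟨c', h⟩ := ih
      exact ⟨_, .appR _ h⟩
  | sOm q hb' => exact ⟨_, .sRed _ _ _⟩
  | kApp q hb' hc ih => exact ⟨_, .appL _ (.kRed _ _)⟩

theorem Bad_star {t u : CL X} (h : RedStar t u) (hb : Bad t) : Bad u := by
  induction h with
  | refl => exact hb
  | tail _ h2 ih => exact Bad_red ih h2

theorem no_nf_of_Bad {t u : CL X} (hb : Bad t) (hn : IsNormal u) (hr : RedStar t u) :
    False :=
  hn (Bad_not_normal (Bad_star hr hb))

end Aux2
section Aux3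

variable {X : Type}

local infixl:100 " ⬝ " => CL.app

/-! #### `Part` plumbing -/

theorem clStar_get_spec {m n : CL X} (h : (clStar m n).Dom) :
    IsNormal ((clStar m n).get h) ∧ RedStar (m ⬝ n) ((clStar m n).get h) :=
  Exists.choose_spec (p := fun u => IsNormal u ∧ RedStar (m ⬝ n) u) h

theorem clStar_eq_some {m n u : CL X} (hr : RedStar (m ⬝ n) u) (hn : IsNormal u) :
    clStar m n = Part.some u := by
  have hd : (clStar m n).Dom := ⟨u, hn, hr⟩
  have hg := clStar_get_spec hd
  exact Part.eq_some_iff.mpr ⟨hd, nf_unique hg.2 hr hg.1 hn⟩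

theorem starIn_eq_some {m n u : CL X} (hr : RedStar (m ⬝ n) u) (hn : IsNormal u)
    (hN : u ∈ Nset' X) : starIn m n = Part.some u := by
  have hd : (clStar m n).Dom := ⟨u, hn, hr⟩
  have hg : (clStar m n).get hd = u := by
    have h := clStar_get_spec hd
    exact nf_unique h.2 hr h.1 hn
  refine Part.eq_some_iff.mpr ⟨⟨hd, ?_⟩, ?_⟩
  · rw [hg]; exact hN
  · exact hg

theorem mem_starIn {m n u : CL X} (h : u ∈ starIn m n) :
    u ∈ Nset' X ∧ IsNormal u ∧ RedStar (m ⬝ n) u := by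
  obtain ⟨H, hv⟩ := h
  have H' : ∃ hc : (clStar m n).Dom, (clStar m n).get hc ∈ Nset' X := H
  obtain ⟨hd, hN⟩ := H'
  have hv' : (clStar m n).get hd = u := hv
  have hs := clStar_get_spec hd
  exact ⟨hv' ▸ hN, hv' ▸ hs.1, hv' ▸ hs.2⟩

theorem pStar'_some_some (a b : CL X) :
    pStar' (Part.some a) (Part.some b) = starIn a b := by
  simp [pStar']

theorem pStar'_some_right (P : Part (CL X)) (c : CL X) :
    pStar' P (Part.some c) = P.bind fun a => starIn a c := by
  unfold pStar'
  simp

/-! #### Concrete terms -/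

/-- `A := S·(K·S)·K`, so that `A·z →* S·(K·z)`. -/
def At (X : Type) : CL X := .app (.app .S (.app .K .S)) .K

/-- `x̂ := S·A·(K·ω)`, so that `x̂·z →* S·(K·z)·ω`. -/
def Xh (X : Type) : CL X := .app (.app .S (At X)) (.app .K (omegaTerm X))

/-- `ŷ := K·ω`. -/
def Yh (X : Type) : CL X := .app .K (omegaTerm X)

/-- `z₀ := K·K`. -/
def Z0 (X : Type) : CL X := .app .K .K

theorem xh_red (z : CL X) :
    RedStar (Xh X ⬝ z) (.S ⬝ (.K ⬝ z) ⬝ omegaTerm X) := by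
  refine Relation.ReflTransGen.head (Red.sRed (At X) (.K ⬝ omegaTerm X) z) ?_
  refine Relation.ReflTransGen.head (Red.appL _ (Red.sRed (.K ⬝ .S) .K z)) ?_
  refine Relation.ReflTransGen.head (Red.appL _ (Red.appL _ (Red.kRed .S z))) ?_
  exact Relation.ReflTransGen.single (Red.appR _ (Red.kRed (omegaTerm X) z))

theorem om_red (q : CL X) : RedStar (omegaTerm X ⬝ q) (q ⬝ q) := by
  refine Relation.ReflTransGen.head (Red.sRed (iTerm X) (iTerm X) q) ?_
  refine Relation.ReflTransGen.head (Red.appL _ (Red.sRed .K .K q)) ?_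
  refine Relation.ReflTransGen.head (Red.appL _ (Red.kRed q (.K ⬝ q))) ?_
  refine Relation.ReflTransGen.head (Red.appR _ (Red.sRed .K .K q)) ?_
  exact Relation.ReflTransGen.single (Red.appR _ (Red.kRed q (.K ⬝ q)))

theorem isNormal_At : IsNormal (At X) :=
  isNormal_app (isNormal_app isNormal_S
    (isNormal_app isNormal_K isNormal_S trivial) trivial) isNormal_K trivial

theorem isNormal_Xh : IsNormal (Xh X) :=
  isNormal_app (isNormal_app isNormal_S isNormal_At trivial) isNormal_Komega trivial

theorem isNormal_SKzo {z : CL X} (hz : IsNormal z) :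
    IsNormal (.S ⬝ (.K ⬝ z) ⬝ omegaTerm X) :=
  isNormal_app (isNormal_app isNormal_S
    (isNormal_app isNormal_K hz trivial) trivial) isNormal_omega trivial

theorem isNormal_Z0 : IsNormal (Z0 X) :=
  isNormal_app isNormal_K isNormal_K trivial

/-! #### Membership in `L` and `N'` -/

theorem mem_N'_of_L {t : CL X} (h : t ∈ Lset X) : t ∈ Nset' X :=
  Set.mem_union_left _ h

theorem var_mem_L (q : X) : (.var q : CL X) ∈ Lset X :=
  ⟨isNormal_var q, fun x _ =>
    ⟨.var q ⬝ .var x, isNormal_app (isNormal_var q) (isNormal_var x) trivial, .refl⟩⟩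

theorem K_mem_L : (.K : CL X) ∈ Lset X :=
  ⟨isNormal_K, fun x _ =>
    ⟨.K ⬝ .var x, isNormal_app isNormal_K (isNormal_var x) trivial, .refl⟩⟩

theorem omega_mem_L : omegaTerm X ∈ Lset X :=
  ⟨isNormal_omega, fun x _ =>
    ⟨.var x ⬝ .var x, isNormal_app (isNormal_var x) (isNormal_var x) trivial,
      om_red (.var x)⟩⟩

theorem Yh_mem_L : Yh X ∈ Lset X :=
  ⟨isNormal_Komega, fun x _ =>
    ⟨omegaTerm X, isNormal_omega,
      Relation.ReflTransGen.single (Red.kRed (omegaTerm X) (.var x))⟩⟩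

theorem Z0_mem_L : Z0 X ∈ Lset X :=
  ⟨isNormal_Z0, fun x _ =>
    ⟨.K, isNormal_K, Relation.ReflTransGen.single (Red.kRed .K (.var x))⟩⟩

theorem Xh_mem_L : Xh X ∈ Lset X :=
  ⟨isNormal_Xh, fun x _ =>
    ⟨.S ⬝ (.K ⬝ .var x) ⬝ omegaTerm X, isNormal_SKzo (isNormal_var x),
      xh_red (.var x)⟩⟩

/-- `M₀ := S·(K·z₀)·ω ∈ L` since `M₀·x →* z₀·(ω·x) = K·K·(ω·x) → K`. -/
theorem M0_mem_L : (.S ⬝ (.K ⬝ Z0 X) ⬝ omegaTerm X : CL X) ∈ Lset X := by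
  refine ⟨isNormal_SKzo isNormal_Z0, fun x _ => ⟨.K, isNormal_K, ?_⟩⟩
  refine Relation.ReflTransGen.head (Red.sRed (.K ⬝ Z0 X) (omegaTerm X) (.var x)) ?_
  refine Relation.ReflTransGen.head (Red.appL _ (Red.kRed (Z0 X) (.var x))) ?_
  exact Relation.ReflTransGen.single (Red.kRed .K (omegaTerm X ⬝ .var x))

theorem vp_mem_L (v q : X) : (.var v ⬝ .var q : CL X) ∈ Lset X :=
  ⟨isNormal_app (isNormal_var v) (isNormal_var q) trivial, fun x _ =>
    ⟨.var v ⬝ .var q ⬝ .var x,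
      isNormal_app (isNormal_app (isNormal_var v) (isNormal_var q) trivial)
        (isNormal_var x) trivial, .refl⟩⟩

theorem vpwp_mem_L (v w q : X) :
    (.var v ⬝ .var q ⬝ (.var w ⬝ .var q) : CL X) ∈ Lset X := by
  have h1 : IsNormal (.var v ⬝ .var q ⬝ (.var w ⬝ .var q) : CL X) :=
    isNormal_app (isNormal_app (isNormal_var v) (isNormal_var q) trivial)
      (isNormal_app (isNormal_var w) (isNormal_var q) trivial) trivial
  refine ⟨h1, fun x _ =>
    ⟨.var v ⬝ .var q ⬝ (.var w ⬝ .var q) ⬝ .var x,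
      isNormal_app h1 (isNormal_var x) trivial, .refl⟩⟩

/-! #### The `starIn` computations used in the law instances -/

theorem st_v_p (v q : X) :
    starIn (.var v) (.var q) = Part.some (.var v ⬝ .var q) :=
  starIn_eq_some .refl (isNormal_app (isNormal_var v) (isNormal_var q) trivial)
    (mem_N'_of_L (vp_mem_L v q))

theorem st_vp_wp (v w q : X) :
    starIn (.var v ⬝ .var q) (.var w ⬝ .var q)
      = Part.some (.var v ⬝ .var q ⬝ (.var w ⬝ .var q)) :=
  starIn_eq_some .refl
    (isNormal_app (isNormal_app (isNormal_var v) (isNormal_var q) trivial)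
      (isNormal_app (isNormal_var w) (isNormal_var q) trivial) trivial)
    (mem_N'_of_L (vpwp_mem_L v w q))

theorem st_Xh_Z0 :
    starIn (Xh X) (Z0 X) = Part.some (.S ⬝ (.K ⬝ Z0 X) ⬝ omegaTerm X) :=
  starIn_eq_some (xh_red (Z0 X)) (isNormal_SKzo isNormal_Z0) (mem_N'_of_L M0_mem_L)

theorem st_Yh_Z0 : starIn (Yh X) (Z0 X) = Part.some (omegaTerm X) :=
  starIn_eq_some (Relation.ReflTransGen.single (Red.kRed (omegaTerm X) (Z0 X)))
    isNormal_omega (mem_N'_of_L omega_mem_L)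

theorem st_M0_om :
    starIn (.S ⬝ (.K ⬝ Z0 X) ⬝ omegaTerm X : CL X) (omegaTerm X) = Part.some .K := by
  refine starIn_eq_some ?_ isNormal_K (mem_N'_of_L K_mem_L)
  refine Relation.ReflTransGen.head
    (Red.sRed (.K ⬝ Z0 X) (omegaTerm X) (omegaTerm X)) ?_
  refine Relation.ReflTransGen.head (Red.appL _ (Red.kRed (Z0 X) (omegaTerm X))) ?_
  exact Relation.ReflTransGen.single (Red.kRed .K (omegaTerm X ⬝ omegaTerm X))

theorem not_occurs_Xh (q : X) : ¬ varOccurs q (Xh X) := by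
  simp [Xh, At, omegaTerm, iTerm, varOccurs]

theorem not_occurs_Yh (q : X) : ¬ varOccurs q (Yh X) := by
  simp [Yh, omegaTerm, iTerm, varOccurs]

end Aux3
section Main

local infixl:100 " ⬝ " => CL.app

theorem noS (X : Type) [Infinite X] :
    ¬ ∃ t ∈ Nset' X,
      (∀ x ∈ Nset' X, ∀ y ∈ Nset' X,
        (pStar' (pStar' (Part.some t) (Part.some x)) (Part.some y)).Dom) ∧
      (∀ x ∈ Nset' X, ∀ y ∈ Nset' X, ∀ z ∈ Nset' X,
        pStar' (pStar' (pStar' (Part.some t) (Part.some x)) (Part.some y)) (Part.some z)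
          = pStar' (pStar' (Part.some x) (Part.some z)) (pStar' (Part.some y) (Part.some z))) := by
  rintro ⟨s, hs, h0, h1⟩
  classical
  -- three distinct variables not occurring in s
  obtain ⟨v, hv⟩ := Infinite.exists_notMem_finset ((varsOf s).toFinset)
  obtain ⟨w, hw⟩ := Infinite.exists_notMem_finset (insert v ((varsOf s).toFinset))
  obtain ⟨p, hp⟩ := Infinite.exists_notMem_finset (insert w (insert v ((varsOf s).toFinset)))
  simp only [Finset.mem_insert, List.mem_toFinset, not_or] at hv hw hp
  obtain ⟨hwv, hws⟩ := hw
  obtain ⟨hpw, hpv, hps⟩ := hp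
  -- a := s *' v and b := s *' v *' w
  have h0vw := h0 (.var v) (mem_N'_of_L (var_mem_L v)) (.var w) (mem_N'_of_L (var_mem_L w))
  rw [pStar'_some_some, pStar'_some_right] at h0vw
  obtain ⟨b, hEb⟩ := Part.dom_iff_mem.mp h0vw
  obtain ⟨a, ha, hab⟩ := Part.mem_bind_iff.mp hEb
  have eq_sv : starIn s (.var v) = Part.some a := Part.eq_some_iff.mpr ha
  have eq_avw : starIn a (.var w) = Part.some b := Part.eq_some_iff.mpr hab
  obtain ⟨-, -, hred_sv⟩ := mem_starIn ha
  obtain ⟨-, -, hred_avw⟩ := mem_starIn hab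
  -- law at (v, w, p) : b *' p = v·p·(w·p)
  have E1 := h1 (.var v) (mem_N'_of_L (var_mem_L v)) (.var w) (mem_N'_of_L (var_mem_L w))
      (.var p) (mem_N'_of_L (var_mem_L p))
  simp only [pStar'_some_some] at E1
  rw [eq_sv, st_v_p v p, st_v_p w p] at E1
  simp only [pStar'_some_some] at E1
  rw [eq_avw, st_vp_wp] at E1
  simp only [pStar'_some_some] at E1
  have hmem1 : (.var v ⬝ .var p ⬝ (.var w ⬝ .var p) : CL X) ∈ starIn b (.var p) := by
    rw [E1]; exact Part.mem_some _
  have hred_bp : RedStar (b ⬝ .var p) (.var v ⬝ .var p ⬝ (.var w ⬝ .var p)) :=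
    (mem_starIn hmem1).2.2
  -- e := s *' x̂ *' ŷ
  have h0xy := h0 (Xh X) (mem_N'_of_L Xh_mem_L) (Yh X) (mem_N'_of_L Yh_mem_L)
  rw [pStar'_some_some, pStar'_some_right] at h0xy
  obtain ⟨e, hEe⟩ := Part.dom_iff_mem.mp h0xy
  obtain ⟨a2, ha2, ha2e⟩ := Part.mem_bind_iff.mp hEe
  have eq_sx : starIn s (Xh X) = Part.some a2 := Part.eq_some_iff.mpr ha2
  have eq_a2y : starIn a2 (Yh X) = Part.some e := Part.eq_some_iff.mpr ha2e
  obtain ⟨-, -, hred_sx⟩ := mem_starIn ha2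
  obtain ⟨heN, hen, hred_a2y⟩ := mem_starIn ha2e
  -- law at (x̂, ŷ, z₀) : e *' z₀ = K, hence e ≠ d, hence e ∈ L
  have E3 := h1 (Xh X) (mem_N'_of_L Xh_mem_L) (Yh X) (mem_N'_of_L Yh_mem_L)
      (Z0 X) (mem_N'_of_L Z0_mem_L)
  simp only [pStar'_some_some] at E3
  rw [eq_sx, st_Xh_Z0, st_Yh_Z0] at E3
  simp only [pStar'_some_some] at E3
  rw [eq_a2y, st_M0_om] at E3
  simp only [pStar'_some_some] at E3
  have hKmem : (.K : CL X) ∈ starIn e (Z0 X) := by rw [E3]; exact Part.mem_some _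
  obtain ⟨-, -, hred_ez0⟩ := mem_starIn hKmem
  have hne : e ≠ dTerm X := by
    intro hd
    refine no_nf_of_Bad (t := e ⬝ Z0 X) ?_ isNormal_K hred_ez0
    rw [hd]; exact Bad.dApp _
  have heL : e ∈ Lset X := by
    rcases heN with h | h
    · exact h
    · exact absurd h hne
  -- p does not occur in e
  have hred_sxy : RedStar (s ⬝ Xh X ⬝ Yh X) e :=
    Relation.ReflTransGen.trans (redStar_appL _ hred_sx) hred_a2y
  have hpe : ¬ varOccurs p e := by
    intro h
    rcases occurs_of_redStar hred_sxy h with (h' | h') | h'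
    · exact hps (occurs_mem_varsOf h')
    · exact not_occurs_Xh p h'
    · exact not_occurs_Yh p h'
  -- e ∈ L gives a normal form u of e·p
  obtain ⟨u, hun, hur⟩ :=
    (heL.2 p hpe : ∃ u, IsNormal u ∧ RedStar (e ⬝ .var p) u)
  -- the substitution v ↦ x̂, w ↦ ŷ
  obtain ⟨σ, hσv, hσw, hσp, hσvar⟩ :
      ∃ σ : X → CL X, σ v = Xh X ∧ σ w = Yh X ∧ σ p = .var p ∧
        ∀ q, q ≠ v → q ≠ w → σ q = .var q := by
    refine ⟨fun q => if q = v then Xh X else if q = w then Yh X else .var q,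
      ?_, ?_, ?_, ?_⟩
    · simp
    · simp [hwv]
    · simp [hpv, hpw]
    · intro q h1' h2'; simp [h1', h2']
  have hσs : subst σ s = s :=
    subst_eq_self (fun q hq =>
      hσvar q (fun h => hv (h ▸ occurs_mem_varsOf hq))
        (fun h => hws (h ▸ occurs_mem_varsOf hq)))
  have hred_svw : RedStar (s ⬝ .var v ⬝ .var w) b :=
    Relation.ReflTransGen.trans (redStar_appL _ hred_sv) hred_avw
  have hsub1 : RedStar (s ⬝ Xh X ⬝ Yh X) (subst σ b) := by
    have h' := redStar_subst (σ := σ) hred_svw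
    simpa [subst, hσs, hσv, hσw] using h'
  have hb'e : RedStar (subst σ b) e := by
    obtain ⟨c, hc1, hc2⟩ := confluence hsub1 hred_sxy
    rwa [redStar_normal_eq hen hc2] at hc1
  have hbp' : RedStar (subst σ b ⬝ .var p) (Xh X ⬝ .var p ⬝ (Yh X ⬝ .var p)) := by
    have h' := redStar_subst (σ := σ) hred_bp
    simpa [subst, hσv, hσw, hσp] using h'
  have hT : RedStar (subst σ b ⬝ .var p)
      (.S ⬝ (.K ⬝ .var p) ⬝ omegaTerm X ⬝ omegaTerm X) := by
    refine Relation.ReflTransGen.trans hbp' ?_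
    exact redStar_app (xh_red (.var p))
      (Relation.ReflTransGen.single (Red.kRed (omegaTerm X) (.var p)))
  have hU : RedStar (subst σ b ⬝ .var p) u :=
    Relation.ReflTransGen.trans (redStar_appL _ hb'e) hur
  obtain ⟨c, hc1, hc2⟩ := confluence hU hT
  rw [redStar_normal_eq hun hc1] at hc2
  exact no_nf_of_Bad (Bad.sOm p W.omega) hun hc2

end Main
/-- there are no `t, u ∈ N'` such that `⟨N', *', t, u⟩` is a
partial combinatory algebra; in fact there is no `t ∈ N'` such that
`t *' x *' y` is defined for all `x, y ∈ N'` and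
`t *' x *' y *' z ≃ x *' z *' (y *' z)` for all `x, y, z ∈ N'`. -/
theorem stmt14 (X : Type) [Infinite X] :
    (¬ ∃ t ∈ Nset' X, ∃ u ∈ Nset' X,
      (∀ x ∈ Nset' X, ∀ y ∈ Nset' X,
        (pStar' (pStar' (Part.some t) (Part.some x)) (Part.some y)).Dom) ∧
      (∀ x ∈ Nset' X, ∀ y ∈ Nset' X, ∀ z ∈ Nset' X,
        pStar' (pStar' (pStar' (Part.some t) (Part.some x)) (Part.some y)) (Part.some z)
          = pStar' (pStar' (Part.some x) (Part.some z)) (pStar' (Part.some y) (Part.some z))) ∧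
      (∀ x ∈ Nset' X, ∀ y ∈ Nset' X,
        pStar' (pStar' (Part.some u) (Part.some x)) (Part.some y) = Part.some x)) ∧
    (¬ ∃ t ∈ Nset' X,
      (∀ x ∈ Nset' X, ∀ y ∈ Nset' X,
        (pStar' (pStar' (Part.some t) (Part.some x)) (Part.some y)).Dom) ∧
      (∀ x ∈ Nset' X, ∀ y ∈ Nset' X, ∀ z ∈ Nset' X,
        pStar' (pStar' (pStar' (Part.some t) (Part.some x)) (Part.some y)) (Part.some z)
          = pStar' (pStar' (Part.some x) (Part.some z)) (pStar' (Part.some y) (Part.some z)))) := by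

  constructor
  · rintro ⟨t, ht, u, hu, ha, hb, -⟩
    exact noS X ⟨t, ht, ha, hb⟩
  · exact noS X
end
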